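/- arXiv:1611.00957 — 7 statements merged into one kernel-verified Lean document; each statement's English description precedes it below -/
import Mathlib

section
/- Let k ≥ 1 be an integer and let f : ℕ → ℂ satisfy f(m) ≠ 0 for all m ≥ 1, with a constant C > 0 such that |f(m)^{-k}| ≤ C for all m ≥ 1. Then for every complex z with |z| < 1/3, both of the following series converge absolutely and ∑_{n≥1} z^n / f(n)^k = ∑_{j≥1} (∑_{m=1}^{j} C(j,m) (-1)^{j-m} / f(m)^k) · z^j / (1-z)^{j+1}, where C(j,m) denotes the binomial coefficient. -/
/-!
Put `w = z / (1 - z)`, so that `1 + w = (1 - z)⁻¹` and `z = w / (1 + w)`. The negative binomial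
series `(1 + w)^{-(m+1)} = ∑ᵢ C(i + m, m) (-w)ⁱ` expands each term `a m * z ^ m` as a series in `w`,
which turns `∑ₘ a m * z ^ m` into a double series over pairs `(m, i)`. For bounded `a` the same
expansion with `‖w‖` in place of `-w` dominates it by `∑ₘ ‖w‖ᵐ / (1 - ‖w‖)^(m+1)`, finite as soon as
`‖w‖ < 1 / 2`, which `‖z‖ < 1 / 3` guarantees; summing the double series along the antidiagonals
`m + i = j` instead produces the right-hand side.
-/

open Finset

theorem HasSum.sum_antidiagonal {α A : Type*} [AddCommMonoid α] [TopologicalSpace α]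
    [ContinuousAdd α] [RegularSpace α] [AddCommMonoid A] [HasAntidiagonal A]
    {f : A × A → α} {a : α} (hf : HasSum f a) :
    HasSum (fun n ↦ ∑ p ∈ antidiagonal n, f p) a :=
  (HasAntidiagonal.sigmaAntidiagonalEquivProd.hasSum_iff.mpr hf).sigma fun n ↦ by
    rw [← sum_coe_sort]
    exact hasSum_fintype _

theorem summable_choose_mul_pow_of_lt_half {r : ℝ} (hr₀ : 0 ≤ r) (hr : r < 1 / 2) :
    Summable fun p : ℕ × ℕ ↦ ((p.2 + p.1).choose p.1 : ℝ) * r ^ (p.1 + p.2) := by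
  have hr₁ : 0 < 1 - r := by linarith
  have hrow (m : ℕ) :
      HasSum (fun i ↦ ((i + m).choose m : ℝ) * r ^ (m + i)) (r ^ m / (1 - r) ^ (m + 1)) := by
    have h := (hasSum_choose_mul_geometric_of_norm_lt_one m
      (r := r) (by rw [Real.norm_of_nonneg hr₀]; linarith)).mul_left (r ^ m)
    rw [mul_one_div] at h
    exact h.congr_fun fun i ↦ by ring
  refine (summable_prod_of_nonneg fun p ↦ by positivity).mpr ⟨fun m ↦ (hrow m).summable, ?_⟩
  simp only [fun m ↦ (hrow m).tsum_eq]
  have hq : r / (1 - r) < 1 := by rw [div_lt_one hr₁]; linarith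
  refine ((summable_geometric_of_lt_one (div_nonneg hr₀ hr₁.le) hq).mul_left (1 - r)⁻¹).congr
    fun m ↦ ?_
  rw [div_pow, pow_succ']
  field_simp

theorem one_sub_ne_zero_of_norm_lt_one {R : Type*} [NormedRing R] [NormOneClass R] {z : R}
    (hz : ‖z‖ < 1) : 1 - z ≠ 0 :=
  sub_ne_zero.mpr fun h ↦ by simp [← h] at hz

theorem norm_div_one_sub_lt_half {𝕜 : Type*} [NormedDivisionRing 𝕜] {z : 𝕜} (hz : ‖z‖ < 1 / 3) :
    ‖z / (1 - z)‖ < 1 / 2 := by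
  have h : 1 - ‖z‖ ≤ ‖1 - z‖ := by simpa using norm_sub_norm_le (1 : 𝕜) z
  rw [norm_div, div_lt_iff₀ (by linarith)]
  linarith

section EulerTransform

variable {𝕜 : Type*} [NormedField 𝕜] [CompleteSpace 𝕜] {z : 𝕜}

theorem hasSum_euler_transform {a : ℕ → 𝕜} {C : ℝ} (ha : ∀ m, ‖a m‖ ≤ C)
    (hz : ‖z‖ < 1 / 3) :
    Summable (fun n ↦ z ^ n * a n) ∧
      HasSum (fun j ↦ (∑ m ∈ range (j + 1), (j.choose m : 𝕜) * (-1) ^ (j - m) * a m) *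
        z ^ j / (1 - z) ^ (j + 1)) (∑' n, z ^ n * a n) := by
  have hz₁ : 1 - z ≠ 0 := one_sub_ne_zero_of_norm_lt_one (by linarith)
  set w := z / (1 - z) with hw
  have hw₂ : ‖w‖ < 1 / 2 := norm_div_one_sub_lt_half hz
  set F : ℕ × ℕ → 𝕜 := fun p ↦
    a p.1 * w ^ p.1 / (1 - z) * ((p.2 + p.1).choose p.1 * (-w) ^ p.2)
  have hC : 0 ≤ C := (norm_nonneg _).trans (ha 0)
  have hF_norm (p : ℕ × ℕ) :
      ‖F p‖ ≤ C / ‖1 - z‖ * (((p.2 + p.1).choose p.1 : ℝ) * ‖w‖ ^ (p.1 + p.2)) := by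
    have hchoose := Nat.norm_cast_le (α := 𝕜) ((p.2 + p.1).choose p.1)
    rw [norm_one, mul_one] at hchoose
    simp only [F, norm_mul, norm_div, norm_pow, norm_neg, pow_add]
    rw [div_mul_eq_mul_div, div_mul_eq_mul_div, div_le_div_iff_of_pos_right (by simpa using hz₁)]
    calc ‖a p.1‖ * ‖w‖ ^ p.1 * (‖((p.2 + p.1).choose p.1 : 𝕜)‖ * ‖w‖ ^ p.2)
        ≤ C * ‖w‖ ^ p.1 * (((p.2 + p.1).choose p.1 : ℝ) * ‖w‖ ^ p.2) := by
          gcongr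
          · exact ha _
      _ = _ := by ring
  have hF : Summable F := .of_norm_bounded
    ((summable_choose_mul_pow_of_lt_half (norm_nonneg w) hw₂).mul_left _) hF_norm
  have hcol (m : ℕ) : HasSum (fun i ↦ F (m, i)) (z ^ m * a m) := by
    have h := (hasSum_choose_mul_geometric_of_norm_lt_one m
      (r := -w) (by rw [norm_neg]; linarith)).mul_left (a m * w ^ m / (1 - z))
    have hvalue : a m * w ^ m / (1 - z) * (1 / (1 - -w) ^ (m + 1)) = z ^ m * a m := by
      have h1w : 1 - -w = (1 - z)⁻¹ := by rw [hw]; field_simp; ring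
      rw [h1w, inv_pow, one_div, inv_inv, hw, div_pow, pow_succ]
      field_simp
    exact hvalue ▸ h
  have hdiag (j : ℕ) : ∑ p ∈ antidiagonal j, F p =
      (∑ m ∈ range (j + 1), (j.choose m : 𝕜) * (-1) ^ (j - m) * a m) *
        z ^ j / (1 - z) ^ (j + 1) := by
    rw [Nat.sum_antidiagonal_eq_sum_range_succ_mk, sum_mul, sum_div]
    refine sum_congr rfl fun m hm ↦ ?_
    obtain ⟨i, rfl⟩ := Nat.exists_eq_add_of_le (mem_range_succ_iff.mp hm)
    dsimp only [F]
    rw [Nat.add_sub_cancel_left, add_comm i, hw, neg_pow, div_pow, div_pow]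
    field_simp
    ring
  have hlhs := hF.hasSum.prod_fiberwise hcol
  refine ⟨hlhs.summable, hlhs.tsum_eq ▸ ?_⟩
  simpa only [hdiag] using hF.hasSum.sum_antidiagonal

theorem hasSum_euler_transform_succ {a : ℕ → 𝕜} {C : ℝ} (ha : ∀ m, 1 ≤ m → ‖a m‖ ≤ C)
    (hz : ‖z‖ < 1 / 3) :
    Summable (fun n ↦ z ^ (n + 1) * a (n + 1)) ∧
      HasSum (fun j ↦ (∑ m ∈ Icc 1 (j + 1),
          ((j + 1).choose m : 𝕜) * (-1) ^ (j + 1 - m) * a m) * z ^ (j + 1) / (1 - z) ^ (j + 2))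
        (∑' n, z ^ (n + 1) * a (n + 1)) := by
  set b : ℕ → 𝕜 := fun m ↦ if m = 0 then 0 else a m
  have hb : ∀ m, ‖b m‖ ≤ C := by
    intro m
    rcases m.eq_zero_or_pos with rfl | hm
    · simpa [b] using (norm_nonneg _).trans (ha 1 le_rfl)
    · simpa [b, hm.ne'] using ha m hm
  have hb₀ : b 0 = 0 := if_pos rfl
  have hb_succ (n : ℕ) : b (n + 1) = a (n + 1) := if_neg n.succ_ne_zero
  have hcoeff (j : ℕ) :
      ∑ m ∈ range (j + 1 + 1), ((j + 1).choose m : 𝕜) * (-1) ^ (j + 1 - m) * b m =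
        ∑ m ∈ Icc 1 (j + 1), ((j + 1).choose m : 𝕜) * (-1) ^ (j + 1 - m) * a m := by
    rw [range_eq_Ico, sum_eq_sum_Ico_succ_bot (by omega), Ico_add_one_right_eq_Icc, hb₀,
      mul_zero, zero_add]
    refine sum_congr rfl fun m hm ↦ ?_
    obtain ⟨n, rfl⟩ := Nat.exists_eq_add_of_le' (mem_Icc.mp hm).1
    rw [hb_succ]
  obtain ⟨hsum, hrhs⟩ := hasSum_euler_transform hb hz
  have hshift := (hasSum_nat_add_iff' 1).mpr hrhs
  rw [hsum.tsum_eq_zero_add] at hshift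
  simp only [hcoeff, hb₀, hb_succ, mul_zero, zero_mul, zero_div, range_one, sum_singleton,
    zero_add, sub_zero] at hshift
  exact ⟨by simpa only [hb_succ] using (summable_nat_add_iff 1).mpr hsum, hshift⟩

end EulerTransform

theorem stmt_0_general (k : ℕ) (f : ℕ → ℂ) (C : ℝ)
    (hbound : ∀ m : ℕ, 1 ≤ m → ‖(f m ^ k)⁻¹‖ ≤ C)
    (z : ℂ) (hz : ‖z‖ < 1 / 3) :
    Summable (fun n : ℕ => z ^ (n + 1) / f (n + 1) ^ k) ∧
    Summable (fun j : ℕ =>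
      (∑ m ∈ Finset.Icc 1 (j + 1),
        ((j + 1).choose m : ℂ) * (-1) ^ (j + 1 - m) / f m ^ k) *
        z ^ (j + 1) / (1 - z) ^ (j + 2)) ∧
    (∑' n : ℕ, z ^ (n + 1) / f (n + 1) ^ k) =
      ∑' j : ℕ,
        (∑ m ∈ Finset.Icc 1 (j + 1),
          ((j + 1).choose m : ℂ) * (-1) ^ (j + 1 - m) / f m ^ k) *
          z ^ (j + 1) / (1 - z) ^ (j + 2) := by
  obtain ⟨hsum, hrhs⟩ := hasSum_euler_transform_succ (a := fun m ↦ (f m ^ k)⁻¹) hbound hz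
  simp only [div_eq_mul_inv] at hrhs ⊢
  exact ⟨hsum, hrhs.summable, hrhs.tsum_eq.symm⟩

/-- Geometric series case of the generalized zeta series transformation. -/
theorem stmt_0 (k : ℕ) (hk : 1 ≤ k) (f : ℕ → ℂ)
    (hf : ∀ m : ℕ, 1 ≤ m → f m ≠ 0) (C : ℝ) (hC : 0 < C)
    (hbound : ∀ m : ℕ, 1 ≤ m → ‖(f m ^ k)⁻¹‖ ≤ C)
    (z : ℂ) (hz : ‖z‖ < 1 / 3) :
    Summable (fun n : ℕ => z ^ (n + 1) / f (n + 1) ^ k) ∧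
    Summable (fun j : ℕ =>
      (∑ m ∈ Finset.Icc 1 (j + 1),
        ((j + 1).choose m : ℂ) * (-1) ^ (j + 1 - m) / f m ^ k) *
        z ^ (j + 1) / (1 - z) ^ (j + 2)) ∧
    (∑' n : ℕ, z ^ (n + 1) / f (n + 1) ^ k) =
      ∑' j : ℕ,
        (∑ m ∈ Finset.Icc 1 (j + 1),
          ((j + 1).choose m : ℂ) * (-1) ^ (j + 1 - m) / f m ^ k) *
          z ^ (j + 1) / (1 - z) ^ (j + 2) :=
  stmt_0_general k f C hbound z hz
end

section
/- Let k ≥ 1 be an integer and let f : ℕ → ℂ satisfy f(m) ≠ 0 for all m ≥ 1, with a constant C > 0 such that |f(m)^{-k}| ≤ C for all m ≥ 1. Then for all complex numbers r and z, ∑_{n≥1} r^n z^n / (n! · f(n)^k) = e^{rz} · ∑_{j≥1} (1/j!) (∑_{m=1}^{j} C(j,m) (-1)^{j-m} / f(m)^k) · (rz)^j, where both series converge absolutely and C(j,m) denotes the binomial coefficient. -/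
/-!
Multiplying `∑ aₙ wⁿ / n!` by `e^{-w} = ∑ (-1)ⁱ wⁱ / i!` and forming the Cauchy product gives the
coefficients `wʲ / j! · ∑ₘ C(j,m) (-1)^{j-m} aₘ = wʲ / j! · Δʲa(0)`. For bounded `a`,
`‖Δʲa(0)‖ ≤ 2ʲ sup ‖a‖`, so both series converge absolutely and the product formula applies.
The theorem is the case `aₙ = 1 / f(n)ᵏ`.
-/

open Finset fwdDiff
open scoped Nat

theorem norm_fwdDiff_iter_le {M E : Type*} [AddCommMonoid M] [SeminormedAddCommGroup E]
    {a : M → E} {C : ℝ} (ha : ∀ x, ‖a x‖ ≤ C) (h : M) (j : ℕ) (x : M) :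
    ‖Δ_[h] ^[j] a x‖ ≤ C * 2 ^ j := by
  induction j generalizing a C with
  | zero => simpa using ha x
  | succ j ih =>
    have hΔ (y : M) : ‖Δ_[h] a y‖ ≤ 2 * C :=
      (norm_sub_le (a (y + h)) (a y)).trans (by linarith [ha (y + h), ha y])
    rw [Function.iterate_succ_apply, pow_succ', ← mul_assoc, mul_comm C]
    exact ih hΔ

theorem summable_norm_mul_pow_div_factorial {b : ℕ → ℂ} {C R : ℝ}
    (hb : ∀ n, ‖b n‖ ≤ C * R ^ n) (w : ℂ) :
    Summable fun n => ‖b n * w ^ n / (n ! : ℂ)‖ := by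
  refine .of_nonneg_of_le (fun _ => norm_nonneg _) (fun n => ?_)
    ((Real.summable_pow_div_factorial (R * ‖w‖)).mul_left C)
  rw [norm_div, norm_mul, norm_pow, Complex.norm_natCast, mul_pow, mul_div_assoc, mul_div_assoc,
    ← mul_assoc]
  gcongr
  exact hb n

theorem sum_antidiagonal_mul_pow_div_factorial (a b : ℕ → ℂ) (w : ℂ) (j : ℕ) :
    ∑ p ∈ antidiagonal j, a p.1 * w ^ p.1 / p.1 ! * (b p.2 * w ^ p.2 / p.2 !) =
      (∑ m ∈ range (j + 1), (j.choose m : ℂ) * a m * b (j - m)) * w ^ j / j ! := by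
  rw [Nat.sum_antidiagonal_eq_sum_range_succ_mk, sum_mul, sum_div]
  refine sum_congr rfl fun m hm => ?_
  have hmj : m ≤ j := Nat.lt_succ_iff.mp (mem_range.mp hm)
  have hj : (j ! : ℂ) ≠ 0 := mod_cast j.factorial_ne_zero
  rw [Nat.cast_choose ℂ hmj, ← pow_mul_pow_sub w hmj]
  field_simp

theorem tsum_mul_pow_div_factorial_eq_exp_mul_tsum_fwdDiff {a : ℕ → ℂ} {C : ℝ}
    (ha : ∀ n, ‖a n‖ ≤ C) (w : ℂ) :
    ∑' n, a n * w ^ n / n ! = Complex.exp w * ∑' j, Δ_[1] ^[j] a 0 * w ^ j / j ! := by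
  have hA := summable_norm_mul_pow_div_factorial (R := 1) (by simpa using ha) w
  have hE := summable_norm_mul_pow_div_factorial (b := fun n => (-1) ^ n) (C := 1) (R := 1)
    (by simp) w
  have hexp : ∑' n, (-1) ^ n * w ^ n / n ! = Complex.exp (-w) := by
    simp_rw [← neg_pow, Complex.exp_eq_exp_ℂ]
    exact (NormedSpace.expSeries_div_hasSum_exp (-w)).tsum_eq
  have hprod : (∑' n, a n * w ^ n / n !) * Complex.exp (-w) =
      ∑' j, Δ_[1] ^[j] a 0 * w ^ j / j ! := by
    rw [← hexp, tsum_mul_tsum_eq_tsum_sum_antidiagonal_of_summable_norm hA hE]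
    refine tsum_congr fun j => ?_
    rw [sum_antidiagonal_mul_pow_div_factorial, fwdDiff_iter_eq_sum_shift]
    congr 2
    refine sum_congr rfl fun m _ => ?_
    rw [zero_add, smul_eq_mul, mul_one, zsmul_eq_mul]
    push_cast
    ring
  rw [← hprod, mul_left_comm, ← Complex.exp_add, add_neg_cancel, Complex.exp_zero, mul_one]

theorem fwdDiff_iter_zero_eq_sum_Icc {a : ℕ → ℂ} (ha0 : a 0 = 0) (j : ℕ) :
    Δ_[1] ^[j] a 0 = ∑ m ∈ Icc 1 j, (j.choose m : ℂ) * (-1) ^ (j - m) * a m := by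
  rw [fwdDiff_iter_eq_sum_shift, range_eq_Ico, sum_eq_sum_Ico_succ_bot (by positivity),
    zero_add, Ico_add_one_right_eq_Icc]
  simp [ha0, zsmul_eq_mul, mul_comm]

theorem stmt_1_general (k : ℕ) (f : ℕ → ℂ) (C : ℝ) (hC : 0 < C)
    (hbound : ∀ m : ℕ, 1 ≤ m → ‖(f m ^ k)⁻¹‖ ≤ C)
    (r z : ℂ) :
    Summable (fun n : ℕ =>
      r ^ (n + 1) * z ^ (n + 1) / ((Nat.factorial (n + 1) : ℂ) * f (n + 1) ^ k)) ∧
    Summable (fun j : ℕ =>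
      (1 / (Nat.factorial (j + 1) : ℂ)) *
        (∑ m ∈ Finset.Icc 1 (j + 1),
          ((j + 1).choose m : ℂ) * (-1) ^ (j + 1 - m) / f m ^ k) *
        (r * z) ^ (j + 1)) ∧
    (∑' n : ℕ, r ^ (n + 1) * z ^ (n + 1) / ((Nat.factorial (n + 1) : ℂ) * f (n + 1) ^ k)) =
      Complex.exp (r * z) *
        ∑' j : ℕ,
          (1 / (Nat.factorial (j + 1) : ℂ)) *
            (∑ m ∈ Finset.Icc 1 (j + 1),
              ((j + 1).choose m : ℂ) * (-1) ^ (j + 1 - m) / f m ^ k) *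
            (r * z) ^ (j + 1) := by
  -- `a 0 = 0` accounts for the missing `m = 0` terms of the inner sums.
  set a : ℕ → ℂ := fun n => if n = 0 then 0 else (f n ^ k)⁻¹
  have ha0 : a 0 = 0 := if_pos rfl
  have ha (n : ℕ) : ‖a n‖ ≤ C := by
    rcases n.eq_zero_or_pos with rfl | hn
    · simpa [ha0] using hC.le
    · simpa [a, hn.ne'] using hbound n hn
  have hA : (fun n : ℕ => r ^ (n + 1) * z ^ (n + 1) / (((n + 1) ! : ℂ) * f (n + 1) ^ k)) =
      fun n => a (n + 1) * (r * z) ^ (n + 1) / (n + 1) ! := by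
    funext n
    simp only [a, Nat.succ_ne_zero, if_false, mul_pow]
    ring
  have hB : (fun j : ℕ => 1 / ((j + 1) ! : ℂ) *
      (∑ m ∈ Icc 1 (j + 1), ((j + 1).choose m : ℂ) * (-1) ^ (j + 1 - m) / f m ^ k) *
        (r * z) ^ (j + 1)) =
      fun j => Δ_[1] ^[j + 1] a 0 * (r * z) ^ (j + 1) / (j + 1) ! := by
    funext j
    rw [fwdDiff_iter_zero_eq_sum_Icc ha0, one_div_mul_eq_div, div_mul_eq_mul_div]
    congr 2
    refine sum_congr rfl fun m hm => ?_
    simp [a, Nat.one_le_iff_ne_zero.mp (mem_Icc.mp hm).1, div_eq_mul_inv]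
  have hSA := (summable_norm_mul_pow_div_factorial (R := 1) (by simpa using ha) (r * z)).of_norm
  have hSB := (summable_norm_mul_pow_div_factorial (norm_fwdDiff_iter_le ha 1 · 0) (r * z)).of_norm
  have key := tsum_mul_pow_div_factorial_eq_exp_mul_tsum_fwdDiff ha (r * z)
  rw [hSA.tsum_eq_zero_add, hSB.tsum_eq_zero_add] at key
  rw [hA, hB]
  refine ⟨(summable_nat_add_iff 1).mpr hSA, (summable_nat_add_iff 1).mpr hSB, ?_⟩
  simpa [ha0] using key

/-- Exponential series case of the generalized zeta series transformation. -/
theorem stmt_1 (k : ℕ) (hk : 1 ≤ k) (f : ℕ → ℂ)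
    (hf : ∀ m : ℕ, 1 ≤ m → f m ≠ 0) (C : ℝ) (hC : 0 < C)
    (hbound : ∀ m : ℕ, 1 ≤ m → ‖(f m ^ k)⁻¹‖ ≤ C)
    (r z : ℂ) :
    Summable (fun n : ℕ =>
      r ^ (n + 1) * z ^ (n + 1) / ((Nat.factorial (n + 1) : ℂ) * f (n + 1) ^ k)) ∧
    Summable (fun j : ℕ =>
      (1 / (Nat.factorial (j + 1) : ℂ)) *
        (∑ m ∈ Finset.Icc 1 (j + 1),
          ((j + 1).choose m : ℂ) * (-1) ^ (j + 1 - m) / f m ^ k) *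
        (r * z) ^ (j + 1)) ∧
    (∑' n : ℕ, r ^ (n + 1) * z ^ (n + 1) / ((Nat.factorial (n + 1) : ℂ) * f (n + 1) ^ k)) =
      Complex.exp (r * z) *
        ∑' j : ℕ,
          (1 / (Nat.factorial (j + 1) : ℂ)) *
            (∑ m ∈ Finset.Icc 1 (j + 1),
              ((j + 1).choose m : ℂ) * (-1) ^ (j + 1 - m) / f m ^ k) *
            (r * z) ^ (j + 1) :=
  stmt_1_general k f C hC hbound r z
end

section
/- Let α, β be positive real numbers and let k ≥ 1 and n ≥ 0 be integers. Then ∑_{j=0}^{n} C(n+1,j+1) · ( ∑_{m=0}^{j} C(j,m) (-1)^{j-m} (αm+β)^{-k} ) = ∑_{i=0}^{n} 1/(αi+β)^k, where C(n,j) denotes the binomial coefficient; equivalently the left-hand side equals β^{-k} + H_n^{(k)}(α,β), where H_n^{(k)}(α,β) = ∑_{i=1}^{n} 1/(αi+β)^k denotes the generalized k-order harmonic numbers. -/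
/-!
The inner sum is the iterated forward difference `Δ^j f 0` of `f i = 1 / (α i + β)^k`. The
Gregory–Newton formula gives `f i = ∑_j C(i, j) Δ^j f 0`; summing over `i ≤ n` and exchanging the
sums, the hockey-stick identity `∑_{i ≤ n} C(i, j) = C(n + 1, j + 1)` gives the left-hand side.
-/

open Finset

theorem Nat.sum_range_choose_eq_choose_succ (n k : ℕ) :
    ∑ i ∈ range (n + 1), i.choose k = (n + 1).choose (k + 1) := by
  rw [← Nat.sum_Icc_choose]
  refine (sum_subset (fun i hi => mem_range.2 (Nat.lt_succ_of_le (mem_Icc.1 hi).2)) ?_).symm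
  intro i _ hik
  exact Nat.choose_eq_zero_of_lt (by simp_all)

section fwdDiff

variable {M : Type*} [AddCommMonoid M] (h : M)

theorem sum_range_eq_sum_choose_smul_fwdDiff_iter {G : Type*} [AddCommGroup G] (f : M → G)
    (n : ℕ) (y : M) :
    ∑ i ∈ range (n + 1), f (y + i • h) =
      ∑ j ∈ range (n + 1), (n + 1).choose (j + 1) • (fwdDiff h)^[j] f y := by
  have newton (i : ℕ) (hi : i ∈ range (n + 1)) :
      f (y + i • h) = ∑ j ∈ range (n + 1), i.choose j • (fwdDiff h)^[j] f y := by
    rw [shift_eq_sum_fwdDiff_iter h f i y]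
    refine sum_subset (range_subset_range.2 (by simpa using hi)) fun j _ hj => ?_
    rw [Nat.choose_eq_zero_of_lt (by simpa using hj), zero_smul]
  rw [sum_congr rfl newton, sum_comm]
  simp_rw [← sum_smul, Nat.sum_range_choose_eq_choose_succ]

theorem fwdDiff_iter_eq_sum_choose_mul {R : Type*} [CommRing R] (f : M → R) (j : ℕ) (y : M) :
    (fwdDiff h)^[j] f y =
      ∑ m ∈ range (j + 1), (j.choose m : R) * (-1) ^ (j - m) * f (y + m • h) := by
  rw [fwdDiff_iter_eq_sum_shift]
  refine sum_congr rfl fun m _ => ?_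
  rw [zsmul_eq_mul]
  push_cast
  ring

end fwdDiff

theorem stmt_4_general (α β : ℝ) (k n : ℕ) :
    (∑ j ∈ Finset.range (n + 1),
      ((n + 1).choose (j + 1) : ℝ) *
        (∑ m ∈ Finset.range (j + 1),
          (j.choose m : ℝ) * (-1) ^ (j - m) / (α * m + β) ^ k)) =
      ∑ i ∈ Finset.range (n + 1), 1 / (α * i + β) ^ k ∧
    (∑ j ∈ Finset.range (n + 1),
      ((n + 1).choose (j + 1) : ℝ) *
        (∑ m ∈ Finset.range (j + 1),
          (j.choose m : ℝ) * (-1) ^ (j - m) / (α * m + β) ^ k)) =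
      1 / β ^ k + ∑ i ∈ Finset.Icc 1 n, 1 / (α * i + β) ^ k := by
  have newton :=
    (sum_range_eq_sum_choose_smul_fwdDiff_iter 1 (fun i : ℕ => 1 / (α * i + β) ^ k) n 0).symm
  simp only [nsmul_eq_mul, fwdDiff_iter_eq_sum_choose_mul, smul_eq_mul, mul_one, zero_add,
    mul_one_div] at newton
  refine ⟨newton, newton.trans ?_⟩
  rw [range_eq_Ico, sum_eq_sum_Ico_succ_bot n.add_one_pos, zero_add, Ico_add_one_right_eq_Icc,
    Nat.cast_zero, mul_zero, zero_add]

/-- Expansion of the generalized `k`-order harmonic numbers by the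
generalized Stirling numbers of the second kind. -/
theorem stmt_4 (α β : ℝ) (hα : 0 < α) (hβ : 0 < β) (k n : ℕ) (hk : 1 ≤ k) :
    (∑ j ∈ Finset.range (n + 1),
      ((n + 1).choose (j + 1) : ℝ) *
        (∑ m ∈ Finset.range (j + 1),
          (j.choose m : ℝ) * (-1) ^ (j - m) / (α * m + β) ^ k)) =
      ∑ i ∈ Finset.range (n + 1), 1 / (α * i + β) ^ k ∧
    (∑ j ∈ Finset.range (n + 1),
      ((n + 1).choose (j + 1) : ℝ) *
        (∑ m ∈ Finset.range (j + 1),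
          (j.choose m : ℝ) * (-1) ^ (j - m) / (α * m + β) ^ k)) =
      1 / β ^ k + ∑ i ∈ Finset.Icc 1 n, 1 / (α * i + β) ^ k :=
  stmt_4_general α β k n
end

section
/- π/4 = ∑_{j≥0} (1/2^{j+1}) · ∏_{i=1}^{j} (2i)/(2i+1), where the empty product (j = 0) equals 1. -/
/-!
By Wallis' formula `∫₀^π sin^(2j+1) x dx = 2 ∏_{i=1}^j 2i/(2i+1)`, the `j`-th term of the series is
`∫₀^π sin^(2j+1) x / 2^(j+2) dx`. These integrands are dominated by `2^-(j+2)`, so the series may be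
summed under the integral sign; the geometric series in `sin² x / 2` gives
`∫₀^π sin x / (2 (1 + cos² x)) dx = [-arctan (cos x) / 2]₀^π = π/4`.
-/

open Real Finset intervalIntegral

lemma prod_Icc_two_mul_div_two_mul_add_one (j : ℕ) :
    ∏ i ∈ Icc 1 j, (2 * i : ℝ) / (2 * i + 1) = ∏ i ∈ range j, (2 * (i : ℝ) + 2) / (2 * i + 3) := by
  rw [← Ico_add_one_right_eq_Icc, prod_Ico_eq_prod_range, add_tsub_cancel_right]
  refine prod_congr rfl fun i _ => ?_
  push_cast
  ring_nf

lemma hasSum_pow_two_mul_add_one_div_two_pow {y : ℝ} (hy : y ^ 2 < 2) :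
    HasSum (fun j : ℕ => y ^ (2 * j + 1) / 2 ^ (j + 2)) (y / (2 * (2 - y ^ 2))) := by
  have hr : ‖y ^ 2 / 2‖ < 1 := by
    rw [norm_of_nonneg (by positivity)]
    linarith
  have hsum : y / (2 * (2 - y ^ 2)) = y / 4 * (1 - y ^ 2 / 2)⁻¹ := by
    have : 2 - y ^ 2 ≠ 0 := by linarith
    field_simp
    ring
  rw [hsum]
  refine ((hasSum_geometric_of_norm_lt_one hr).mul_left (y / 4)).congr_fun fun j => ?_
  rw [pow_succ, pow_mul, pow_add, div_pow]
  ring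

lemma integral_sin_div_one_add_cos_sq (a b : ℝ) :
    ∫ x in a..b, sin x / (1 + cos x ^ 2) = arctan (cos a) - arctan (cos b) := by
  have hderiv : ∀ x ∈ Set.uIcc a b,
      HasDerivAt (fun y => -arctan (cos y)) (sin x / (1 + cos x ^ 2)) x := by
    intro x _
    refine (hasDerivAt_cos x).arctan.neg.congr_deriv ?_
    ring
  have hcont : Continuous fun x => sin x / (1 + cos x ^ 2) :=
    continuous_sin.div (by fun_prop) fun x => by positivity
  rw [integral_eq_sub_of_hasDerivAt hderiv (hcont.intervalIntegrable a b)]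
  ring

lemma hasSum_integral_sin_pow_odd_div_two_pow (a b : ℝ) :
    HasSum (fun j : ℕ => ∫ x in a..b, sin x ^ (2 * j + 1) / 2 ^ (j + 2))
      (∫ x in a..b, sin x / (2 * (2 - sin x ^ 2))) := by
  refine hasSum_integral_of_dominated_convergence (fun j _ => 1 / 2 ^ (j + 2))
    (fun j => (by fun_prop : Continuous _).aestronglyMeasurable) (fun j => ?_)
    (.of_forall fun _ _ => ?_) intervalIntegrable_const
    (.of_forall fun x _ => hasSum_pow_two_mul_add_one_div_two_pow ?_)
  · refine .of_forall fun x _ => ?_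
    rw [norm_div, norm_pow, norm_pow, Real.norm_two]
    gcongr
    exact pow_le_one₀ (norm_nonneg _) (abs_sin_le_one x)
  · exact summable_geometric_two.comp_injective (add_left_injective 2) |>.congr fun j => by simp
  · nlinarith [sin_sq_le_one x]

/-- New series for the Dirichlet beta function value `β(1) = π/4`. -/
theorem stmt_6 :
    Real.pi / 4 =
      ∑' j : ℕ, (1 / 2 ^ (j + 1)) * ∏ i ∈ Finset.Icc 1 j, (2 * i : ℝ) / (2 * i + 1) := by
  have hterm (j : ℕ) : ∫ x in 0..π, sin x ^ (2 * j + 1) / 2 ^ (j + 2)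
      = (1 / 2 ^ (j + 1)) * ∏ i ∈ Icc 1 j, (2 * i : ℝ) / (2 * i + 1) := by
    rw [integral_div, integral_sin_pow_odd,
      prod_Icc_two_mul_div_two_mul_add_one, pow_succ _ (j + 1)]
    ring
  have hlim : ∫ x in 0..π, sin x / (2 * (2 - sin x ^ 2)) = π / 4 := by
    have hintegrand (x : ℝ) : sin x / (2 * (2 - sin x ^ 2)) = sin x / (1 + cos x ^ 2) / 2 := by
      rw [div_div, cos_sq']
      ring_nf
    simp_rw [hintegrand]
    rw [integral_div, integral_sin_div_one_add_cos_sq]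
    simp [arctan_one, arctan_neg]
  simp_rw [← hterm]
  exact ((hasSum_integral_sin_pow_odd_div_two_pow 0 π).tsum_eq.trans hlim).symm
end

section
/- For every integer j ≥ 0 and every real z with z < 1, the j-th derivative of the function z ↦ -log(1-z)/(1-z) evaluated at z equals (H_j - log(1-z)) · j! / (1-z)^{j+1}, where H_j = ∑_{k=1}^{j} 1/k is the j-th harmonic number (H_0 = 0). -/
/-! Each differentiation of `(C - log (1 - z)) * j! / (1 - z) ^ (j + 1)` raises `j` by one and adds
`1 / (j + 1)` to the constant `C`, so starting from `C = 0`, `j = 0` the constant after `j` steps is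
the harmonic number `H_j`. -/

open Real Finset

noncomputable def logDivPow (C : ℝ) (j : ℕ) (z : ℝ) : ℝ :=
  (C - log (1 - z)) * j.factorial / (1 - z) ^ (j + 1)

lemma hasDerivAt_logDivPow (C : ℝ) (j : ℕ) {z : ℝ} (hz : z < 1) :
    HasDerivAt (logDivPow C j) (logDivPow (C + 1 / (j + 1)) (j + 1) z) z := by
  have hpos : 0 < 1 - z := sub_pos.mpr hz
  have hsub : HasDerivAt (fun w : ℝ => 1 - w) (-1) z := (hasDerivAt_id z).const_sub 1
  have hlog : HasDerivAt (fun w : ℝ => log (1 - w)) ((1 - z)⁻¹ * (-1)) z :=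
    (hasDerivAt_log hpos.ne').comp z hsub
  have hpow : HasDerivAt (fun w : ℝ => (1 - w) ^ (j + 1)) ((j + 1 : ℕ) * (1 - z) ^ j * (-1)) z :=
    hsub.pow (j + 1)
  have hquot := ((hlog.const_sub C).mul_const (j.factorial : ℝ)).div hpow (pow_ne_zero _ hpos.ne')
  refine hquot.congr_deriv ?_
  simp only [logDivPow, Nat.factorial_succ]
  push_cast
  field_simp
  ring

lemma iteratedDeriv_eqOn_logDivPow (j : ℕ) :
    Set.EqOn (iteratedDeriv j (fun z : ℝ => -log (1 - z) / (1 - z)))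
      (logDivPow (∑ k ∈ Icc 1 j, (1 : ℝ) / k) j) (Set.Iio 1) := by
  induction j with
  | zero => intro z _; simp [logDivPow]
  | succ j ih =>
    intro z hz
    rw [iteratedDeriv_succ, ih.deriv isOpen_Iio hz, (hasDerivAt_logDivPow _ j hz).deriv,
      sum_Icc_succ_top (Nat.le_add_left 1 j)]
    push_cast
    rfl

/-- Derivative formula for the ordinary generating function of the
first-order harmonic numbers. -/
theorem stmt_11 (j : ℕ) (z : ℝ) (hz : z < 1) :
    iteratedDeriv j (fun z : ℝ => -Real.log (1 - z) / (1 - z)) z =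
      ((∑ k ∈ Finset.Icc 1 j, (1 : ℝ) / k) - Real.log (1 - z)) *
        (Nat.factorial j : ℝ) / (1 - z) ^ (j + 1) :=
  iteratedDeriv_eqOn_logDivPow j hz
end

section
/- For every real z with |z| < 1, ∑_{n≥1} H_n^2 z^n = (1/(1-z)) · ( (log(1-z))^2 + ∑_{k≥1} z^k/k^2 ), where H_n = ∑_{k=1}^{n} 1/k is the n-th harmonic number and both series converge. -/
/-!
Since `H (n+1)² - H n² = 2 H n / (n+1) + 1/(n+1)²`, multiplying the series by `1 - z` turns its
coefficients into `2 H n / (n+1) + 1/(n+1)²`. The second part is the dilogarithm; the first is the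
Taylor series of `log (1 - z)²`, obtained by squaring `-log (1 - z) = ∑ zᵏ/k` as a Cauchy product
and using `1/(i j) = (1/i + 1/j)/(i + j)`, which makes the convolution of `1/k` with itself equal
to `2 H n / (n+1)`.
-/

open Finset Real

theorem harmonic_le_self (n : ℕ) : harmonic n ≤ n :=
  calc harmonic n = ∑ i ∈ range n, ((i + 1 : ℕ) : ℚ)⁻¹ := rfl
    _ ≤ ∑ _i ∈ range n, 1 := sum_le_sum fun i _ => inv_le_one_of_one_le₀ (by simp)
    _ = n := by simp

theorem harmonic_succ_sq_sub_sq (n : ℕ) :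
    harmonic (n + 1) ^ 2 - harmonic n ^ 2 = 2 * harmonic n / (n + 1) + 1 / ((n : ℚ) + 1) ^ 2 := by
  rw [harmonic_succ]
  push_cast
  field_simp
  ring

theorem sum_antidiagonal_inv_mul_inv (n : ℕ) :
    ∑ p ∈ antidiagonal n, ((p.1 + 1 : ℚ) * (p.2 + 1))⁻¹ = 2 * harmonic (n + 1) / (n + 2) := by
  have hpartial : ∀ p ∈ antidiagonal n,
      ((p.1 + 1 : ℚ) * (p.2 + 1))⁻¹ = ((p.1 + 1 : ℚ)⁻¹ + (p.2 + 1 : ℚ)⁻¹) / (n + 2) := by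
    rintro ⟨i, j⟩ hij
    rw [HasAntidiagonal.mem_antidiagonal] at hij
    subst hij
    push_cast
    field_simp
    ring
  have hfst : ∑ p ∈ antidiagonal n, (p.1 + 1 : ℚ)⁻¹ = harmonic (n + 1) := by
    rw [Nat.sum_antidiagonal_eq_sum_range_succ fun i _ => (i + 1 : ℚ)⁻¹]
    simp [harmonic]
  have hsnd : ∑ p ∈ antidiagonal n, (p.2 + 1 : ℚ)⁻¹ = harmonic (n + 1) := by
    rw [← hfst, ← Nat.sum_antidiagonal_swap]
    rfl
  rw [sum_congr rfl hpartial, ← sum_div, sum_add_distrib, hfst, hsnd, two_mul]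

theorem HasSum.fwdDiff_mul_pow_succ {R : Type*} [CommRing R] [TopologicalSpace R]
    [IsTopologicalRing R] {a : ℕ → R} {z s : R} (h : HasSum (fun n => a (n + 1) * z ^ (n + 1)) s) :
    HasSum (fun n => (a (n + 1) - a n) * z ^ (n + 1)) ((1 - z) * s - z * a 0) := by
  have h0 : HasSum (fun n => a n * z ^ n) (s + a 0) := by
    rw [← hasSum_nat_add_iff' 1]
    simpa using h
  rw [show (1 - z) * s - z * a 0 = s - z * (s + a 0) by ring]
  exact (h.sub (h0.mul_left z)).congr_fun fun n => by ring

theorem summable_harmonic_sq_mul_pow {z : ℝ} (hz : |z| < 1) :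
    Summable fun n : ℕ => (harmonic n : ℝ) ^ 2 * z ^ n := by
  refine (summable_pow_mul_geometric_of_norm_lt_one 2 (r := |z|) (by simpa)).of_norm_bounded
    fun n => ?_
  have h0 : (0 : ℝ) ≤ harmonic n := by exact_mod_cast sum_nonneg fun i _ => by positivity
  have hH : (harmonic n : ℝ) ≤ n := by exact_mod_cast harmonic_le_self n
  rw [norm_mul, norm_pow, norm_pow, Real.norm_eq_abs, Real.norm_eq_abs, abs_of_nonneg h0]
  gcongr

theorem summable_pow_succ_div_sq {z : ℝ} (hz : |z| ≤ 1) :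
    Summable fun k : ℕ => z ^ (k + 1) / ((k : ℝ) + 1) ^ 2 := by
  have hp : Summable fun k : ℕ => 1 / ((k : ℝ) + 1) ^ 2 := by
    simpa using (summable_nat_add_iff 1).mpr (summable_one_div_nat_pow.mpr one_lt_two)
  refine hp.of_norm_bounded fun k => ?_
  rw [norm_div, norm_pow, norm_pow, Real.norm_eq_abs, Real.norm_eq_abs]
  gcongr
  · exact pow_le_one₀ (abs_nonneg z) hz
  · exact le_abs_self _

theorem hasSum_log_one_sub_sq {z : ℝ} (hz : |z| < 1) :
    HasSum (fun n : ℕ => 2 * harmonic n / (n + 1) * z ^ (n + 1)) (log (1 - z) ^ 2) := by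
  set L : ℕ → ℝ := fun k => z ^ (k + 1) / (k + 1)
  have hL : HasSum L (-log (1 - z)) := hasSum_pow_div_log_of_abs_lt_one hz
  have hLnorm : Summable fun k => ‖L k‖ := by
    have hcast (k : ℕ) : |(k : ℝ) + 1| = k + 1 := abs_of_pos k.cast_add_one_pos
    simpa [L, abs_div, abs_pow, hcast] using
      (hasSum_pow_div_log_of_abs_lt_one (by rwa [abs_abs] : |(|z|)| < 1)).summable
  have hcoeff (n : ℕ) :
      ∑ p ∈ antidiagonal n, L p.1 * L p.2 = 2 * harmonic (n + 1) / (n + 2) * z ^ (n + 2) := by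
    have hterm : ∀ p ∈ antidiagonal n,
        L p.1 * L p.2 = (((p.1 + 1 : ℚ) * (p.2 + 1))⁻¹ : ℚ) * z ^ (n + 2) := by
      rintro ⟨i, j⟩ hij
      rw [HasAntidiagonal.mem_antidiagonal] at hij
      subst hij
      simp only [L]
      push_cast
      field_simp
      ring
    rw [sum_congr rfl hterm, ← sum_mul, ← Rat.cast_sum, sum_antidiagonal_inv_mul_inv]
    push_cast
    ring
  have hprod : HasSum (fun n : ℕ => 2 * harmonic (n + 1) / (n + 2) * z ^ (n + 2))
      (log (1 - z) ^ 2) := by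
    have hsum := (summable_norm_sum_mul_antidiagonal_of_summable_norm hLnorm hLnorm).of_norm
    have htsum := tsum_mul_tsum_eq_tsum_sum_antidiagonal_of_summable_norm hLnorm hLnorm
    rw [hL.tsum_eq, neg_mul_neg, ← sq] at htsum
    simp only [hcoeff] at hsum htsum
    exact htsum ▸ hsum.hasSum
  refine (hasSum_nat_add_iff' 1).mp ?_
  simp only [sum_range_one, harmonic_zero, Rat.cast_zero, mul_zero, zero_div, zero_mul, sub_zero]
  refine hprod.congr_fun fun n => ?_
  push_cast
  ring

/-- Ordinary generating function of the squares of the first-order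
harmonic numbers. -/
theorem stmt_13 (z : ℝ) (hz : |z| < 1) :
    Summable (fun n : ℕ =>
      (∑ k ∈ Finset.Icc 1 (n + 1), (1 : ℝ) / k) ^ 2 * z ^ (n + 1)) ∧
    Summable (fun k : ℕ => z ^ (k + 1) / (k + 1) ^ 2) ∧
    (∑' n : ℕ, (∑ k ∈ Finset.Icc 1 (n + 1), (1 : ℝ) / k) ^ 2 * z ^ (n + 1)) =
      (1 / (1 - z)) *
        ((Real.log (1 - z)) ^ 2 + ∑' k : ℕ, z ^ (k + 1) / (k + 1) ^ 2) := by
  have hIcc (n : ℕ) : ∑ k ∈ Icc 1 n, (1 : ℝ) / k = harmonic n := by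
    simp [harmonic_eq_sum_Icc]
  simp only [hIcc]
  have hsq : Summable fun n : ℕ => (harmonic (n + 1) : ℝ) ^ 2 * z ^ (n + 1) :=
    (summable_nat_add_iff 1).mpr (summable_harmonic_sq_mul_pow hz)
  have hLi := summable_pow_succ_div_sq hz.le
  refine ⟨hsq, hLi, ?_⟩
  have hdiff := hsq.hasSum.fwdDiff_mul_pow_succ (a := fun n => (harmonic n : ℝ) ^ 2)
  have hsplit : HasSum (fun n : ℕ => ((harmonic (n + 1) : ℝ) ^ 2 - harmonic n ^ 2) * z ^ (n + 1))
      (log (1 - z) ^ 2 + ∑' k : ℕ, z ^ (k + 1) / ((k : ℝ) + 1) ^ 2) := by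
    convert (hasSum_log_one_sub_sq hz).add hLi.hasSum using 2 with n
    rw [← Rat.cast_pow, ← Rat.cast_pow, ← Rat.cast_sub, harmonic_succ_sq_sub_sq]
    push_cast
    ring
  have h1z : 1 - z ≠ 0 := by linarith [le_abs_self z]
  have hmul : (1 - z) * ∑' n : ℕ, (harmonic (n + 1) : ℝ) ^ 2 * z ^ (n + 1) =
      log (1 - z) ^ 2 + ∑' k : ℕ, z ^ (k + 1) / ((k : ℝ) + 1) ^ 2 := by
    simpa using hdiff.unique hsplit
  rw [← hmul, one_div, inv_mul_cancel_left₀ h1z]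
end

section
/- ∑_{n≥0} (-1)^n/(n^2+1) = (1/2)·(1 + π/sinh(π)), where the series converges absolutely. -/
open Real Complex intervalIntegral MeasureTheory

namespace Stmt14Aux

local instance : Fact (0 < 2 * π) := ⟨by positivity⟩

lemma neg_one_zpow_sq (n : ℤ) : ((-1 : ℂ) ^ n) * ((-1 : ℂ) ^ n) = 1 := by
  rw [← mul_zpow]; norm_num

lemma neg_one_zpow_inv (n : ℤ) : ((-1 : ℂ) ^ n)⁻¹ = (-1 : ℂ) ^ n :=
  inv_eq_of_mul_eq_one_right (neg_one_zpow_sq n)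

lemma exp_int_pi (n : ℤ) : Complex.exp ((n : ℂ) * (↑π * I)) = (-1 : ℂ) ^ n := by
  rw [Complex.exp_int_mul, Complex.exp_pi_mul_I]

lemma key_integral (n : ℤ) :
    (∫ x in (-π)..π, Complex.exp (-(n : ℂ) * I * x) * Complex.cosh x) =
      2 * (-1) ^ n * Real.sinh π / (1 + (n : ℂ) ^ 2) := by
  have hne1 : (1 - (n : ℂ) * I) ≠ 0 := by
    intro h
    have := congrArg Complex.re h
    simp [Complex.ext_iff] at this
  have hne2 : (-1 - (n : ℂ) * I) ≠ 0 := by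
    intro h
    have := congrArg Complex.re h
    simp [Complex.ext_iff] at this
  have hcont : ∀ c : ℂ, IntervalIntegrable (fun x : ℝ => Complex.exp (c * x))
      MeasureTheory.volume (-π) π := by
    intro c
    apply Continuous.intervalIntegrable
    fun_prop
  have hrw : ∀ x : ℝ, Complex.exp (-(n : ℂ) * I * x) * Complex.cosh x
      = (Complex.exp ((1 - (n : ℂ) * I) * x) + Complex.exp ((-1 - (n : ℂ) * I) * x)) / 2 := by
    intro x
    have h1 : Complex.exp (-(n : ℂ) * I * x) * Complex.exp x
        = Complex.exp ((1 - (n : ℂ) * I) * x) := by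
      rw [← Complex.exp_add, show -(n : ℂ) * I * ↑x + ↑x = (1 - (n : ℂ) * I) * ↑x by ring]
    have h2 : Complex.exp (-(n : ℂ) * I * x) * Complex.exp (-(x : ℂ))
        = Complex.exp ((-1 - (n : ℂ) * I) * x) := by
      rw [← Complex.exp_add, show -(n : ℂ) * I * ↑x + -(x : ℂ) = (-1 - (n : ℂ) * I) * ↑x by ring]
    rw [show Complex.cosh (x : ℂ) = (Complex.exp x + Complex.exp (-(x : ℂ))) / 2 from rfl,
      ← h1, ← h2]
    ring
  rw [intervalIntegral.integral_congr (g := fun x : ℝ =>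
      (Complex.exp ((1 - (n : ℂ) * I) * x) + Complex.exp ((-1 - (n : ℂ) * I) * x)) / 2)
      (fun x _ => hrw x)]
  rw [intervalIntegral.integral_div, intervalIntegral.integral_add (hcont _) (hcont _),
    integral_exp_mul_complex hne1, integral_exp_mul_complex hne2]
  have e1 : Complex.exp ((1 - (n : ℂ) * I) * (π : ℝ)) = Complex.exp π * (-1) ^ n := by
    rw [show (1 - (n : ℂ) * I) * (π : ℝ) = ↑π - (n : ℂ) * (↑π * I) by ring, Complex.exp_sub,
      exp_int_pi, div_eq_mul_inv, neg_one_zpow_inv]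
  have e2 : Complex.exp ((1 - (n : ℂ) * I) * ((-π : ℝ) : ℂ)) = Complex.exp (-π) * (-1) ^ n := by
    rw [show (1 - (n : ℂ) * I) * ((-π : ℝ) : ℂ) = -(π : ℂ) + (n : ℂ) * (↑π * I) by push_cast; ring,
      Complex.exp_add, exp_int_pi]
  have e3 : Complex.exp ((-1 - (n : ℂ) * I) * (π : ℝ)) = Complex.exp (-π) * (-1) ^ n := by
    rw [show (-1 - (n : ℂ) * I) * (π : ℝ) = -(π : ℂ) - (n : ℂ) * (↑π * I) by ring, Complex.exp_sub,
      exp_int_pi, div_eq_mul_inv, neg_one_zpow_inv]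
  have e4 : Complex.exp ((-1 - (n : ℂ) * I) * ((-π : ℝ) : ℂ)) = Complex.exp π * (-1) ^ n := by
    rw [show (-1 - (n : ℂ) * I) * ((-π : ℝ) : ℂ) = (π : ℂ) + (n : ℂ) * (↑π * I) by push_cast; ring,
      Complex.exp_add, exp_int_pi]
  rw [e1, e2, e3, e4]
  have hsinh : ((Real.sinh π : ℝ) : ℂ) = (Complex.exp π - Complex.exp (-π)) / 2 := by
    rw [Complex.ofReal_sinh, show Complex.sinh (π:ℂ) = (Complex.exp π - Complex.exp (-(π:ℂ))) / 2 from rfl]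
  rw [hsinh]
  have hn2 : (1 : ℂ) + (n : ℂ) ^ 2 ≠ 0 := by
    have h : ((1 + (n : ℝ) ^ 2 : ℝ) : ℂ) = 1 + (n : ℂ) ^ 2 := by push_cast; ring
    rw [← h]
    exact_mod_cast (by positivity : (1 + (n : ℝ) ^ 2) ≠ 0)
  field_simp [Complex.I_sq]
  ring_nf
  simp [Complex.I_sq]
  ring

noncomputable def coshC : C(AddCircle (2 * π), ℂ) :=
  ⟨AddCircle.liftIco (2 * π) (-π) (fun x : ℝ => Complex.cosh x), by
    apply AddCircle.liftIco_continuous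
    · rw [show -π + 2 * π = π by ring]
      push_cast
      rw [Complex.cosh_neg]
    · exact (Complex.continuous_cosh.comp Complex.continuous_ofReal).continuousOn⟩

lemma coeff (n : ℤ) :
    fourierCoeff (⇑coshC) n = (-1) ^ n * Real.sinh π / (π * (1 + (n : ℂ) ^ 2)) := by
  have h := fourierCoeff_liftIco_eq (T := 2 * π) (a := -π) (fun x : ℝ => Complex.cosh x) n
  rw [show (⇑coshC) = AddCircle.liftIco (2 * π) (-π) (fun x : ℝ => Complex.cosh x) from rfl, h,
    fourierCoeffOn_eq_integral]
  rw [show -π + 2 * π - -π = 2 * π by ring, show -π + 2 * π = π by ring]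
  have hint : ∀ x : ℝ, (fourier (-n) (x : AddCircle (2 * π)) : ℂ) • Complex.cosh (x : ℂ)
      = Complex.exp (-(n : ℂ) * I * x) * Complex.cosh x := by
    intro x
    rw [fourier_coe_apply, smul_eq_mul]
    congr 2
    push_cast
    have hπ : (π : ℂ) ≠ 0 := by exact_mod_cast Real.pi_ne_zero
    field_simp
  rw [intervalIntegral.integral_congr (fun x _ => hint x), key_integral, real_smul]
  have hπ : (π : ℂ) ≠ 0 := by exact_mod_cast Real.pi_ne_zero
  have hn2 : (1 : ℂ) + (n : ℂ) ^ 2 ≠ 0 := by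
    have h : ((1 + (n : ℝ) ^ 2 : ℝ) : ℂ) = 1 + (n : ℂ) ^ 2 := by push_cast; ring
    rw [← h]
    exact_mod_cast (by positivity : (1 + (n : ℝ) ^ 2) ≠ 0)
  push_cast
  field_simp

lemma coeffR (n : ℤ) :
    fourierCoeff (⇑coshC) n
      = (((-1 : ℝ) ^ n * Real.sinh π / (π * (1 + (n : ℝ) ^ 2)) : ℝ) : ℂ) := by
  rw [coeff]; push_cast; ring

lemma sumNat : Summable (fun k : ℕ => 1 / ((k : ℝ) ^ 2 + 1)) := by
  have h1 : Summable (fun k : ℕ => 1 / ((k : ℝ) + 1) ^ 2) := by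
    have h0 := summable_one_div_nat_pow.mpr (le_refl 2)
    have h2 := (summable_nat_add_iff 1).mpr h0
    simpa using h2
  apply Summable.of_nonneg_of_le (fun k => by positivity) (fun k => ?_) (h1.mul_left 2)
  have he : (2 : ℝ) * (1 / ((k : ℝ) + 1) ^ 2) = 2 / ((k : ℝ) + 1) ^ 2 := by ring
  rw [he, div_le_div_iff₀ (by positivity) (by positivity)]
  nlinarith [sq_nonneg ((k : ℝ) - 1)]

lemma sumCoeff : Summable (fourierCoeff (⇑coshC)) := by
  apply Summable.of_norm_bounded (g := fun n : ℤ => (Real.sinh π / π) * (1 / ((n : ℝ) ^ 2 + 1)))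
  · apply Summable.mul_left
    apply Summable.of_nat_of_neg
    · simpa using sumNat
    · simpa using sumNat
  · intro n
    rw [coeffR, Complex.norm_real]
    have h1 : |(-1 : ℝ) ^ n| = 1 := by
      rcases Int.even_or_odd n with h | h
      · rw [h.neg_one_zpow]; norm_num
      · rw [h.neg_one_zpow]; norm_num
    rw [Real.norm_eq_abs, _root_.abs_div, _root_.abs_mul, h1, one_mul, abs_of_pos (Real.sinh_pos_iff.mpr Real.pi_pos),
      abs_of_pos (by positivity : (0 : ℝ) < π * (1 + (n : ℝ) ^ 2))]
    apply le_of_eq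
    have hπ : (π : ℝ) ≠ 0 := Real.pi_ne_zero
    have hn : (1 : ℝ) + (n : ℝ) ^ 2 ≠ 0 := by positivity
    rw [mul_one_div, div_div, eq_div_iff (by positivity : (π : ℝ) * ((n : ℝ) ^ 2 + 1) ≠ 0),
      div_mul_eq_mul_div, show (π : ℝ) * (1 + (n : ℝ) ^ 2) = π * ((n : ℝ) ^ 2 + 1) by ring,
      mul_div_cancel_right₀ _ (by positivity : (π : ℝ) * ((n : ℝ) ^ 2 + 1) ≠ 0)]

lemma hasSumZ : HasSum (fun i : ℤ => ((-1 : ℝ) ^ i / (1 + (i : ℝ) ^ 2))) (π / Real.sinh π) := by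
  have h0 := has_pointwise_sum_fourier_series_of_summable sumCoeff (0 : AddCircle (2 * π))
  have hF0 : coshC (0 : AddCircle (2 * π)) = 1 := by
    show AddCircle.liftIco (2 * π) (-π) (fun x : ℝ => Complex.cosh x)
      ((0 : ℝ) : AddCircle (2 * π)) = 1
    rw [AddCircle.liftIco_coe_apply ⟨by linarith [Real.pi_pos], by linarith [Real.pi_pos]⟩]
    simp
  rw [hF0] at h0
  simp only [fourier_eval_zero, smul_eq_mul, mul_one] at h0
  rw [show (fun i : ℤ => fourierCoeff (⇑coshC) i)
      = fun i : ℤ => (((-1 : ℝ) ^ i * Real.sinh π / (π * (1 + (i : ℝ) ^ 2)) : ℝ) : ℂ)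
      from funext coeffR, show (1 : ℂ) = ((1 : ℝ) : ℂ) by norm_num,
    Complex.hasSum_ofReal] at h0
  have hs : (0 : ℝ) < Real.sinh π := Real.sinh_pos_iff.mpr Real.pi_pos
  have h1 := h0.mul_left (π / Real.sinh π)
  rw [mul_one] at h1
  have he : (fun i : ℤ => π / Real.sinh π
        * ((-1 : ℝ) ^ i * Real.sinh π / (π * (1 + (i : ℝ) ^ 2))))
      = fun i : ℤ => (-1 : ℝ) ^ i / (1 + (i : ℝ) ^ 2) := by
    funext i
    have hπ : (π : ℝ) ≠ 0 := Real.pi_ne_zero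
    have hn : (1 : ℝ) + (i : ℝ) ^ 2 ≠ 0 := by positivity
    field_simp
  rwa [he] at h1

end Stmt14Aux

/-- Alternating zeta-type series with quadratic denominator `n² + 1`. -/
theorem stmt_14 :
    Summable (fun n : ℕ => |(-1 : ℝ) ^ n / ((n : ℝ) ^ 2 + 1)|) ∧
    (∑' n : ℕ, (-1 : ℝ) ^ n / ((n : ℝ) ^ 2 + 1)) =
      (1 / 2) * (1 + Real.pi / Real.sinh Real.pi) := by
  have h2 := Stmt14Aux.hasSumZ.nat_add_neg
  have h5 : HasSum (fun k : ℕ => 2 * ((-1 : ℝ) ^ k / ((k : ℝ) ^ 2 + 1)))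
      (Real.pi / Real.sinh Real.pi + 1) := by
    convert h2 using 1
    · funext k
      have hinv : ((-1 : ℝ) ^ k)⁻¹ = (-1 : ℝ) ^ k := by
        rcases Nat.even_or_odd k with h | h
        · simp [h.neg_one_pow]
        · rw [h.neg_one_pow]; norm_num
      rw [zpow_neg, zpow_natCast, hinv]
      push_cast
      ring
    · norm_num
  have h6 : HasSum (fun k : ℕ => (-1 : ℝ) ^ k / ((k : ℝ) ^ 2 + 1))
      ((Real.pi / Real.sinh Real.pi + 1) / 2) := by
    have h4 := h5.div_const 2
    simp_rw [mul_div_cancel_left₀ _ (two_ne_zero (α := ℝ))] at h4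
    exact h4
  exact ⟨summable_abs_iff.mpr h6.summable, by rw [h6.tsum_eq]; ring⟩
end
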